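/- Let K be a field, D a division K-algebra such that D ⊗_K D^o is a Noetherian ring, δ₁, …, δ_t pairwise commuting K-derivations of D, Ev(Δ) ⊆ K^t the group of common eigenvalues, and 𝒯 the torsion subgroup of Ev(Δ) (which is finite). Let D₀ := ⋂ᵢ ker(δᵢ) and let D_𝒯 be the K-linear span in D of all common eigenvectors whose eigenvalue tuple lies in 𝒯. Then D_𝒯 is a division K-subalgebra of D, and D_𝒯 has dimension |𝒯| both as a left D₀-vector space and as a right D₀-vector space. -/

import Mathlib

/-!
Leibniz's rule makes the eigenvalue of a product of joint eigenvectors the sum of their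
eigenvalues, so for a group `G` of eigenvalues the `K`-span `D_G` of the eigenvectors with
eigenvalue in `G` is a subalgebra. It is also the left `D₀`-span of one nonzero eigenvector `u_λ`
per `λ ∈ G` (an eigenvector `u` for `λ` is `(u u_λ⁻¹) u_λ` with `u u_λ⁻¹ ∈ D₀`), and these are
`D₀`-independent because joint eigenspaces are independent. So `D_G` has left dimension `|G|` and,
when `G` is finite, right multiplication by a nonzero element, being injective, is onto: `D_G` is a
division algebra.

For finiteness, to a division subalgebra `A` attach the left ideal of `D ⊗ Dᵒᵖ` generated by the
`a ⊗ 1 - 1 ⊗ a°`, `a ∈ A`. If `f ∉ A`, pick a left `A`-linear `ψ : D → D` with kernel `A`; then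
`a ⊗ c ↦ a ψ(c)` kills this ideal but not `f ⊗ 1 - 1 ⊗ f°`. So the ideal is strictly monotone
in `A`, and Noetherianity leaves no room for the strictly growing algebras `D_G` along an infinite
chain of finite subgroups `G` of the torsion group. The right dimension is the left dimension for
`Dᵒᵖ` with the derivations `op ∘ δᵢ ∘ unop`.
-/

open TensorProduct MulOpposite Submodule
open scoped Pointwise

section

variable {K D ι : Type*} [Field K] [DivisionRing D] [Algebra K D]

def IsLeibniz (f : D →ₗ[K] D) : Prop :=
  ∀ a b, f (a * b) = f a * b + a * f b

theorem IsLeibniz.map_one {f : D →ₗ[K] D} (hf : IsLeibniz f) : f 1 = 0 := by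
  simpa using hf 1 1

section JointEigenvectors

variable {δ : ι → D →ₗ[K] D} {lam mu : ι → K} {u v : D}

def IsJointEigenvector (δ : ι → D →ₗ[K] D) (lam : ι → K) (u : D) : Prop :=
  ∀ i, δ i u = lam i • u

def IsJointEigenvalue (δ : ι → D →ₗ[K] D) (lam : ι → K) : Prop :=
  ∃ u ≠ 0, IsJointEigenvector δ lam u

def jointEigenvectors (δ : ι → D →ₗ[K] D) (G : Set (ι → K)) : Set D :=
  {u | ∃ lam ∈ G, IsJointEigenvector δ lam u}

def jointEigenspace (δ : ι → D →ₗ[K] D) (lam : ι → K) : Submodule K D :=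
  ⨅ i, Module.End.eigenspace (δ i) (lam i)

theorem mem_jointEigenspace : u ∈ jointEigenspace δ lam ↔ IsJointEigenvector δ lam u := by
  simp [jointEigenspace, IsJointEigenvector]

theorem isJointEigenvector_zero_iff : IsJointEigenvector δ 0 u ↔ ∀ i, δ i u = 0 := by
  simp [IsJointEigenvector]

theorem isJointEigenvector_one (hδ : ∀ i, IsLeibniz (δ i)) : IsJointEigenvector δ 0 1 :=
  isJointEigenvector_zero_iff.2 fun i => (hδ i).map_one

theorem IsJointEigenvector.mul (hδ : ∀ i, IsLeibniz (δ i)) (hu : IsJointEigenvector δ lam u)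
    (hv : IsJointEigenvector δ mu v) : IsJointEigenvector δ (lam + mu) (u * v) := fun i => by
  rw [hδ i, hu i, hv i, Pi.add_apply, add_smul, smul_mul_assoc, mul_smul_comm]

theorem IsJointEigenvector.inv (hδ : ∀ i, IsLeibniz (δ i)) (hu : IsJointEigenvector δ lam u) :
    IsJointEigenvector δ (-lam) u⁻¹ := by
  rcases eq_or_ne u 0 with rfl | hu0
  · simp [IsJointEigenvector]
  intro i
  have h := hδ i u u⁻¹
  rw [mul_inv_cancel₀ hu0, (hδ i).map_one, hu i, smul_mul_assoc, mul_inv_cancel₀ hu0] at h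
  calc δ i u⁻¹ = u⁻¹ * (u * δ i u⁻¹) := by rw [inv_mul_cancel_left₀ hu0]
    _ = u⁻¹ * -(lam i • 1) := by rw [eq_neg_of_add_eq_zero_right h.symm]
    _ = (-lam) i • u⁻¹ := by simp

theorem IsJointEigenvector.mul_left_of_mem {D₀ : Subalgebra K D} (hδ : ∀ i, IsLeibniz (δ i))
    (hD₀ : ∀ x, x ∈ D₀ ↔ ∀ i, δ i x = 0) {d : D} (hd : d ∈ D₀)
    (hu : IsJointEigenvector δ lam u) : IsJointEigenvector δ lam (d * u) := by
  simpa using (isJointEigenvector_zero_iff.2 ((hD₀ d).1 hd)).mul hδ hu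

theorem span_jointEigenvectors (G : Set (ι → K)) :
    span K (jointEigenvectors δ G) = ⨆ lam ∈ G, jointEigenspace δ lam := by
  have : jointEigenvectors δ G = ⋃ lam ∈ G, (jointEigenspace δ lam : Set D) := by
    ext u
    simp [jointEigenvectors, mem_jointEigenspace]
  simp only [this, span_iUnion₂, span_eq]

theorem iSupIndep_jointEigenspace (hcomm : ∀ i j, Commute (δ i) (δ j)) :
    iSupIndep (jointEigenspace δ) :=
  (Module.End.independent_iInf_maxGenEigenspace_of_forall_mapsTo δ fun i j φ =>
    Module.End.mapsTo_maxGenEigenspace_of_comm (hcomm j i) φ).mono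
    fun _ => iInf_mono fun _ => Module.End.eigenspace_le_maxGenEigenspace

theorem notMem_span_jointEigenvectors (hcomm : ∀ i j, Commute (δ i) (δ j))
    {G : Set (ι → K)} (hlam : lam ∉ G) (hu0 : u ≠ 0) (hu : IsJointEigenvector δ lam u) :
    u ∉ span K (jointEigenvectors δ G) := by
  rw [span_jointEigenvectors]
  exact fun h => hu0 <| Submodule.disjoint_def.1
    ((iSupIndep_jointEigenspace hcomm).disjoint_biSup hlam) u (mem_jointEigenspace.2 hu) h

end JointEigenvectors

abbrev Subalgebra.divisionRingOfInvMem (A : Subalgebra K D) (hA : ∀ x ∈ A, x⁻¹ ∈ A) :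
    DivisionRing A :=
  { A.toRing with
    inv x := ⟨x⁻¹, hA x x.2⟩
    mul_inv_cancel x hx := Subtype.ext (mul_inv_cancel₀ fun h => hx (Subtype.ext h))
    inv_zero := Subtype.ext inv_zero
    nnqsmul := _
    qsmul := _ }

theorem Submodule.inv_mem_of_finite {A : Subalgebra K D} (hA : ∀ x ∈ A, x⁻¹ ∈ A)
    (M : Submodule A D) [Module.Finite A M] (h1 : (1 : D) ∈ M)
    (hmul : ∀ x ∈ M, ∀ y ∈ M, x * y ∈ M) {x : D} (hx : x ∈ M) : x⁻¹ ∈ M := by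
  let _ := A.divisionRingOfInvMem hA
  rcases eq_or_ne x 0 with rfl | hx0
  · simp
  let f : M →ₗ[A] M := (LinearMap.mulRight A x).restrict fun y hy => hmul y hy x hx
  have hf : Function.Injective f := fun y z h =>
    Subtype.ext (mul_right_cancel₀ hx0 (congrArg Subtype.val h))
  obtain ⟨y, hy⟩ := LinearMap.injective_iff_surjective.1 hf ⟨1, h1⟩
  rw [← eq_inv_of_mul_eq_one_left (congrArg Subtype.val hy)]
  exact y.2

section Kernel

variable {δ : ι → D →ₗ[K] D} {D₀ : Subalgebra K D}

theorem inv_mem_of_forall_eq_zero (hδ : ∀ i, IsLeibniz (δ i))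
    (hD₀ : ∀ x, x ∈ D₀ ↔ ∀ i, δ i x = 0) {x : D} (hx : x ∈ D₀) : x⁻¹ ∈ D₀ := by
  have := (isJointEigenvector_zero_iff.2 ((hD₀ x).1 hx)).inv hδ
  rw [neg_zero, isJointEigenvector_zero_iff] at this
  exact (hD₀ _).2 this

theorem restrictScalars_span_jointEigenvectors (hδ : ∀ i, IsLeibniz (δ i))
    (hD₀ : ∀ x, x ∈ D₀ ↔ ∀ i, δ i x = 0) (G : Set (ι → K)) :
    (span D₀ (jointEigenvectors δ G)).restrictScalars K = span K (jointEigenvectors δ G) := by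
  refine le_antisymm (fun x hx => ?_) (span_le_restrictScalars K D₀ _)
  induction hx using span_induction with
  | mem u hu => exact subset_span hu
  | zero => exact zero_mem _
  | add y z _ _ hy hz => exact add_mem hy hz
  | smul d y _ hy =>
    have hd : span K (jointEigenvectors δ G) ≤
        (span K (jointEigenvectors δ G)).comap (LinearMap.mulLeft K (d : D)) :=
      span_le.2 fun u ⟨lam, hlam, hu⟩ => subset_span ⟨lam, hlam, hu.mul_left_of_mem hδ hD₀ d.2⟩
    exact hd hy

theorem span_jointEigenvectors_eq_span_range (hδ : ∀ i, IsLeibniz (δ i))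
    (hD₀ : ∀ x, x ∈ D₀ ↔ ∀ i, δ i x = 0) {G : Set (ι → K)} {v : G → D}
    (hv0 : ∀ lam, v lam ≠ 0) (hv : ∀ lam : G, IsJointEigenvector δ lam (v lam)) :
    span D₀ (jointEigenvectors δ G) = span D₀ (Set.range v) := by
  refine le_antisymm (span_le.2 ?_)
    (span_mono (Set.range_subset_iff.2 fun lam => ⟨lam.1, lam.2, hv lam⟩))
  rintro u ⟨lam, hlam, hu⟩
  have hquot : u * (v ⟨lam, hlam⟩)⁻¹ ∈ D₀ := by
    have := hu.mul hδ ((hv ⟨lam, hlam⟩).inv hδ)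
    rw [add_neg_cancel, isJointEigenvector_zero_iff] at this
    exact (hD₀ _).2 this
  have : u = (⟨_, hquot⟩ : D₀) • v ⟨lam, hlam⟩ := by
    simp [Subalgebra.smul_def, hv0]
  rw [this]
  exact smul_mem _ _ (subset_span ⟨_, rfl⟩)

theorem linearIndependent_of_isJointEigenvector (hδ : ∀ i, IsLeibniz (δ i))
    (hcomm : ∀ i j, Commute (δ i) (δ j)) (hD₀ : ∀ x, x ∈ D₀ ↔ ∀ i, δ i x = 0) {β : Type*}
    {χ : β → ι → K} (hχ : Function.Injective χ) {v : β → D} (hv0 : ∀ b, v b ≠ 0)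
    (hv : ∀ b, IsJointEigenvector δ (χ b) (v b)) : LinearIndependent D₀ v := by
  rw [linearIndependent_iff']
  intro s g hg b hb
  have hterm : ((g b : D) * v b) = 0 :=
    (iSupIndep_iff_finsetSum_eq_zero_imp_eq_zero _).1 ((iSupIndep_jointEigenspace hcomm).comp hχ)
      s (fun b => g b • v b)
      (fun b _ => mem_jointEigenspace.2 ((hv b).mul_left_of_mem hδ hD₀ (g b).2)) hg b hb
  exact Subtype.ext ((mul_eq_zero.1 hterm).resolve_right (hv0 b))

theorem rank_span_jointEigenvectors (hδ : ∀ i, IsLeibniz (δ i))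
    (hcomm : ∀ i j, Commute (δ i) (δ j)) (hD₀ : ∀ x, x ∈ D₀ ↔ ∀ i, δ i x = 0)
    {G : Set (ι → K)} (hGfin : G.Finite) (hG : ∀ lam ∈ G, IsJointEigenvalue δ lam) :
    Module.rank D₀ (span D₀ (jointEigenvectors δ G)) = Nat.card G := by
  let _ := D₀.divisionRingOfInvMem fun x => inv_mem_of_forall_eq_zero hδ hD₀
  choose v hv0 hv using fun lam : G => hG lam lam.2
  have hli := linearIndependent_of_isJointEigenvector hδ hcomm hD₀ Subtype.val_injective hv0 hv
  have : Finite G := hGfin.to_subtype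
  rw [span_jointEigenvectors_eq_span_range hδ hD₀ hv0 hv, rank_span hli,
    ← Nat.card_range_of_injective hli.injective, Nat.cast_card]

end Kernel

section Subalgebra

variable {δ : ι → D →ₗ[K] D}

def eigenSubalgebra (hδ : ∀ i, IsLeibniz (δ i)) (G : AddSubgroup (ι → K)) : Subalgebra K D :=
  (span K (jointEigenvectors δ G)).toSubalgebra
    (subset_span ⟨0, G.zero_mem, isJointEigenvector_one hδ⟩) fun x y hx hy => by
      have hEE : jointEigenvectors δ G * jointEigenvectors δ G ⊆ jointEigenvectors δ G :=
        Set.mul_subset_iff.2 fun _ ⟨lam, hlam, hu⟩ _ ⟨mu, hmu, hv⟩ =>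
          ⟨lam + mu, G.add_mem hlam hmu, hu.mul hδ hv⟩
      have hxy := mul_mem_mul hx hy
      rw [span_mul_span] at hxy
      exact span_mono hEE hxy

theorem eigenSubalgebra_mono (hδ : ∀ i, IsLeibniz (δ i)) : Monotone (eigenSubalgebra hδ) :=
  fun _ _ hGG' => span_mono fun _ ⟨lam, hlam, hu⟩ => ⟨lam, hGG' hlam, hu⟩

theorem eigenSubalgebra_lt (hδ : ∀ i, IsLeibniz (δ i)) (hcomm : ∀ i j, Commute (δ i) (δ j))
    {G G' : AddSubgroup (ι → K)} (hGG' : G ≤ G') {lam : ι → K} (hlam' : lam ∈ G')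
    (hlam : lam ∉ G) (hev : IsJointEigenvalue δ lam) :
    eigenSubalgebra hδ G < eigenSubalgebra hδ G' := by
  obtain ⟨u, hu0, hu⟩ := hev
  exact SetLike.lt_iff_le_and_exists.2 ⟨eigenSubalgebra_mono hδ hGG', u,
    subset_span ⟨lam, hlam', hu⟩, notMem_span_jointEigenvectors hcomm hlam hu0 hu⟩

theorem inv_mem_eigenSubalgebra {D₀ : Subalgebra K D} (hδ : ∀ i, IsLeibniz (δ i))
    (hD₀ : ∀ x, x ∈ D₀ ↔ ∀ i, δ i x = 0) {G : AddSubgroup (ι → K)}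
    (hGfin : (G : Set (ι → K)).Finite)
    (hG : ∀ lam ∈ G, IsJointEigenvalue δ lam) {x : D} (hx : x ∈ eigenSubalgebra hδ G) :
    x⁻¹ ∈ eigenSubalgebra hδ G := by
  set M := span D₀ (jointEigenvectors δ G)
  have hM : ∀ y, y ∈ M ↔ y ∈ eigenSubalgebra hδ G := fun y =>
    SetLike.ext_iff.1 (restrictScalars_span_jointEigenvectors hδ hD₀ G) y
  have : Finite G := hGfin.to_subtype
  choose v hv0 hv using fun lam : G => hG lam lam.2
  have : Module.Finite D₀ M := by
    rw [show M = _ from span_jointEigenvectors_eq_span_range hδ hD₀ hv0 hv]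
    exact Module.Finite.span_of_finite D₀ (Set.finite_range v)
  exact (hM _).1 (M.inv_mem_of_finite (fun _ => inv_mem_of_forall_eq_zero hδ hD₀)
    ((hM 1).2 (one_mem _)) (fun y hy z hz => (hM _).2 (mul_mem ((hM y).1 hy) ((hM z).1 hz)))
    ((hM x).2 hx))

end Subalgebra

section Separation

def Subalgebra.diagonalIdeal (A : Subalgebra K D) : Ideal (D ⊗[K] Dᵐᵒᵖ) :=
  Ideal.span ((fun x => x ⊗ₜ[K] (1 : Dᵐᵒᵖ) - 1 ⊗ₜ[K] op x) '' A)

theorem Subalgebra.diagonalIdeal_mono : Monotone (Subalgebra.diagonalIdeal (K := K) (D := D)) :=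
  fun _ _ hAB => Ideal.span_mono (Set.image_mono hAB)

theorem Subalgebra.exists_linearMap_eq_zero_iff (A : Subalgebra K D) (hA : ∀ x ∈ A, x⁻¹ ∈ A) :
    ∃ ψ : D →ₗ[A] D, ∀ x, ψ x = 0 ↔ x ∈ A := by
  let _ := A.divisionRingOfInvMem hA
  obtain ⟨q, hq⟩ := (A ∙ (1 : D)).exists_isCompl
  refine ⟨q.subtype ∘ₗ q.projectionOnto _ hq.symm, fun x => ?_⟩
  simp [mem_span_singleton, Subalgebra.smul_def]

theorem Subalgebra.tmul_sub_notMem_diagonalIdeal (A : Subalgebra K D) (hA : ∀ x ∈ A, x⁻¹ ∈ A)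
    {f : D} (hf : f ∉ A) : f ⊗ₜ[K] (1 : Dᵐᵒᵖ) - 1 ⊗ₜ[K] op f ∉ A.diagonalIdeal := by
  obtain ⟨ψ, hψ⟩ := A.exists_linearMap_eq_zero_iff hA
  let Θ : D ⊗[K] Dᵐᵒᵖ →ₗ[K] D := TensorProduct.lift <|
    (LinearMap.mul K D).compl₂ (ψ.restrictScalars K ∘ₗ (opLinearEquiv K).symm.toLinearMap)
  have hΘ : ∀ a c, Θ (a ⊗ₜ c) = a * ψ (unop c) := fun _ _ => rfl
  have hgen : ∀ x ∈ A, ∀ r, Θ (r * (x ⊗ₜ 1 - 1 ⊗ₜ op x)) = 0 := by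
    intro x hx r
    induction r using TensorProduct.induction_on with
    | zero => simp
    | tmul a c =>
      have : ψ (x * unop c) = x * ψ (unop c) := ψ.map_smul ⟨x, hx⟩ (unop c)
      rw [mul_sub, Algebra.TensorProduct.tmul_mul_tmul, Algebra.TensorProduct.tmul_mul_tmul,
        map_sub, hΘ, hΘ, mul_one, mul_one, MulOpposite.unop_mul, MulOpposite.unop_op, this,
        mul_assoc, sub_self]
    | add r s hr hs => rw [add_mul, map_add, hr, hs, add_zero]
  -- quantifying over all left factors `r` is what lets the induction pass through `r • w`
  have hker : ∀ w ∈ A.diagonalIdeal, ∀ r, Θ (r * w) = 0 := by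
    intro w hw
    induction hw using span_induction with
    | mem w hw =>
      obtain ⟨x, hx, rfl⟩ := hw
      exact hgen x hx
    | zero => simp
    | add w w' _ _ hw hw' => intro r; rw [mul_add, map_add, hw, hw', add_zero]
    | smul s w _ hw => intro r; rw [smul_eq_mul, ← mul_assoc]; exact hw (r * s)
  intro hmem
  have := hker _ hmem 1
  rw [one_mul, map_sub, hΘ, hΘ, MulOpposite.unop_one, MulOpposite.unop_op, one_mul,
    (hψ 1).2 A.one_mem, mul_zero, zero_sub, neg_eq_zero, hψ] at this
  exact hf this

theorem Subalgebra.diagonalIdeal_lt {A B : Subalgebra K D} (hA : ∀ x ∈ A, x⁻¹ ∈ A) (hAB : A < B) :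
    A.diagonalIdeal < B.diagonalIdeal := by
  obtain ⟨f, hfB, hfA⟩ := SetLike.exists_of_lt hAB
  exact lt_of_le_of_ne (diagonalIdeal_mono hAB.le) fun h =>
    A.tmul_sub_notMem_diagonalIdeal hA hfA (h ▸ Ideal.subset_span ⟨f, hfB, rfl⟩)

theorem wellFoundedGT_subalgebra_inv_mem [IsNoetherianRing (D ⊗[K] Dᵐᵒᵖ)] :
    WellFoundedGT {A : Subalgebra K D // ∀ x ∈ A, x⁻¹ ∈ A} :=
  StrictMono.wellFoundedGT (f := fun A => A.1.diagonalIdeal) fun A _ hAB =>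
    Subalgebra.diagonalIdeal_lt A.2 hAB

end Separation

theorem AddSubgroup.finite_closure_of_subset_torsion {G : Type*} [AddCommGroup G] {s : Set G}
    (hs : s.Finite) (hst : s ⊆ AddCommGroup.torsion G) : (closure s : Set G).Finite := by
  have : Finite s := hs.to_subtype
  have : Finite (closure s) := AddCommGroup.finite_of_fg_isAddTorsion _ fun g =>
    AddSubmonoid.isOfFinAddOrder_coe.1 (closure_le _ |>.2 hst g.2)
  exact Set.toFinite _

section Torsion

variable {δ : ι → D →ₗ[K] D}

def eigenvalueGroup (hδ : ∀ i, IsLeibniz (δ i)) : AddSubgroup (ι → K) where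
  carrier := {lam | IsJointEigenvalue δ lam}
  add_mem' := fun ⟨u, hu0, hu⟩ ⟨v, hv0, hv⟩ => ⟨u * v, mul_ne_zero hu0 hv0, hu.mul hδ hv⟩
  zero_mem' := ⟨1, one_ne_zero, isJointEigenvector_one hδ⟩
  neg_mem' := fun ⟨u, hu0, hu⟩ => ⟨u⁻¹, inv_ne_zero hu0, hu.inv hδ⟩

theorem finite_eigenvalueGroup_inf_torsion [IsNoetherianRing (D ⊗[K] Dᵐᵒᵖ)]
    (hδ : ∀ i, IsLeibniz (δ i)) (hcomm : ∀ i j, Commute (δ i) (δ j)) {D₀ : Subalgebra K D}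
    (hD₀ : ∀ x, x ∈ D₀ ↔ ∀ i, δ i x = 0) :
    ((eigenvalueGroup hδ ⊓ AddCommGroup.torsion (ι → K) : AddSubgroup (ι → K)) :
      Set (ι → K)).Finite := by
  classical
  set T := eigenvalueGroup hδ ⊓ AddCommGroup.torsion (ι → K)
  have hclosure : ∀ s : {s : Finset (ι → K) // ↑s ⊆ (T : Set (ι → K))},
      (AddSubgroup.closure (s : Set (ι → K)) : Set (ι → K)).Finite ∧
        AddSubgroup.closure (s : Set (ι → K)) ≤ T := fun s =>
    ⟨AddSubgroup.finite_closure_of_subset_torsion s.1.finite_toSet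
      (s.2.trans fun _ h => (AddSubgroup.mem_inf.1 h).2), (AddSubgroup.closure_le _).2 s.2⟩
  let A : {s : Finset (ι → K) // ↑s ⊆ (T : Set (ι → K))} →
      {A : Subalgebra K D // ∀ x ∈ A, x⁻¹ ∈ A} := fun s =>
    ⟨eigenSubalgebra hδ (AddSubgroup.closure s), fun _ =>
      inv_mem_eigenSubalgebra hδ hD₀ (hclosure s).1
        fun _ h => (AddSubgroup.mem_inf.1 ((hclosure s).2 h)).1⟩
  have := wellFoundedGT_subalgebra_inv_mem (K := K) (D := D)
  obtain ⟨_, ⟨s, rfl⟩, hmax⟩ :=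
    wellFounded_gt.has_min (Set.range A) (Set.range_nonempty_iff_nonempty.2 ⟨⟨∅, by simp⟩⟩)
  refine (hclosure s).1.subset fun lam hlam => ?_
  by_contra hlams
  let s' : {s : Finset (ι → K) // ↑s ⊆ (T : Set (ι → K))} :=
    ⟨insert lam s.1, by simpa using Set.insert_subset hlam s.2⟩
  refine hmax (A s') ⟨s', rfl⟩ (eigenSubalgebra_lt hδ hcomm ?_ ?_ hlams
    (AddSubgroup.mem_inf.1 hlam).1)
  · exact AddSubgroup.closure_mono (by simp [s'])
  · exact AddSubgroup.subset_closure (by simp [s'])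

end Torsion

section Opposite

variable {δ : ι → D →ₗ[K] D} {lam : ι → K} {u : D}

def opFamily (δ : ι → D →ₗ[K] D) (i : ι) : Dᵐᵒᵖ →ₗ[K] Dᵐᵒᵖ :=
  (opLinearEquiv K).conj (δ i)

@[simp]
theorem opFamily_apply (i : ι) (x : Dᵐᵒᵖ) : opFamily δ i x = op (δ i (unop x)) :=
  rfl

theorem isLeibniz_opFamily (hδ : ∀ i, IsLeibniz (δ i)) (i : ι) : IsLeibniz (opFamily δ i) :=
  fun a b => by
    rw [opFamily_apply, unop_mul, hδ i, op_add, op_mul, op_mul, op_unop, op_unop, add_comm]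
    rfl

theorem commute_opFamily (hcomm : ∀ i j, Commute (δ i) (δ j)) (i j : ι) :
    Commute (opFamily δ i) (opFamily δ j) :=
  LinearMap.ext fun x => congrArg op (LinearMap.congr_fun (hcomm i j) (unop x))

theorem isJointEigenvector_opFamily_op :
    IsJointEigenvector (opFamily δ) lam (op u) ↔ IsJointEigenvector δ lam u :=
  forall_congr' fun i => by rw [opFamily_apply, unop_op, ← op_smul, op_inj]

theorem IsJointEigenvalue.opFamily (h : IsJointEigenvalue δ lam) :
    IsJointEigenvalue (opFamily δ) lam :=
  let ⟨u, hu0, hu⟩ := h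
  ⟨op u, (op_ne_zero_iff u).2 hu0, isJointEigenvector_opFamily_op.2 hu⟩

theorem jointEigenvectors_opFamily (G : Set (ι → K)) :
    jointEigenvectors (opFamily δ) G = op '' jointEigenvectors δ G := by
  ext x
  obtain ⟨u, rfl⟩ := op_surjective x
  simp [jointEigenvectors, isJointEigenvector_opFamily_op, op_injective.mem_set_image]

theorem mem_op_iff_forall_opFamily_eq_zero {D₀ : Subalgebra K D}
    (hD₀ : ∀ x, x ∈ D₀ ↔ ∀ i, δ i x = 0) (x : Dᵐᵒᵖ) : x ∈ D₀.op ↔ ∀ i, opFamily δ i x = 0 := by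
  simp [Subalgebra.mem_op, hD₀]

end Opposite

end

/-- Let `D` be a division `K`-algebra with `D ⊗[K] Dᵐᵒᵖ` Noetherian,
`δ₁, …, δ_t` pairwise commuting `K`-derivations of `D`, `T` the (finite) torsion subgroup of the
group of common eigenvalues, `D₀ = ⋂ᵢ ker δᵢ` and `D_T` the span of the eigenvectors with
eigenvalue in `T`.  Then `T` is finite, `D_T` is a division `K`-subalgebra of `D`, and `D_T`
has left and right dimension `|T|` over `D₀` (the right dimension being expressed as the left
dimension of the corresponding subspace of the opposite algebra `Dᵐᵒᵖ` over `D₀.op`). -/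
theorem stmt6 (K D : Type*) [Field K] [DivisionRing D] [Algebra K D]
    (hNoeth : IsNoetherianRing (D ⊗[K] Dᵐᵒᵖ))
    (t : ℕ) (δ : Fin t → (D →ₗ[K] D))
    (hLeib : ∀ i, ∀ a b : D, δ i (a * b) = δ i a * b + a * δ i b)
    (hcomm : ∀ i j, ∀ x : D, δ i (δ j x) = δ j (δ i x))
    (D₀ : Subalgebra K D) (hD₀ : (D₀ : Set D) = ⋂ i, {x : D | δ i x = 0})
    (T : Set (Fin t → K))
    (hT : T = {lam : Fin t → K | (∃ u : D, u ≠ 0 ∧ ∀ i, δ i u = lam i • u) ∧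
        ∃ n : ℕ, 0 < n ∧ n • lam = 0})
    (E : Set D) (hE : E = {u : D | ∃ lam ∈ T, ∀ i, δ i u = lam i • u}) :
    T.Finite ∧
    (∃ S : Subalgebra K D,
      (S : Set D) = (Submodule.span K E : Set D) ∧
      ∀ x ∈ S, x ≠ 0 → x⁻¹ ∈ S) ∧
    (Submodule.span (↥D₀) E : Set D) = (Submodule.span K E : Set D) ∧
    Module.rank (↥D₀) (↥(Submodule.span (↥D₀) E)) = Nat.card T ∧
    Module.rank (↥(D₀.op)) (↥(Submodule.span (↥(D₀.op)) (MulOpposite.op '' E))) = Nat.card T := by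
  have hδcomm : ∀ i j, Commute (δ i) (δ j) := fun i j => LinearMap.ext (hcomm i j)
  have hD₀' : ∀ x, x ∈ D₀ ↔ ∀ i, δ i x = 0 := fun x => by
    simpa using Set.ext_iff.1 hD₀ x
  set G := eigenvalueGroup hLeib ⊓ AddCommGroup.torsion (Fin t → K)
  obtain rfl : T = G := by
    ext lam
    rw [hT, SetLike.mem_coe, AddSubgroup.mem_inf, AddCommGroup.mem_torsion,
      isOfFinAddOrder_iff_nsmul_eq_zero]
    rfl
  subst hE
  have := hNoeth
  have hTfin := finite_eigenvalueGroup_inf_torsion hLeib hδcomm hD₀'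
  have hTeig : ∀ lam ∈ (G : Set (Fin t → K)), IsJointEigenvalue δ lam :=
    fun _ h => (AddSubgroup.mem_inf.1 h).1
  have hrank' := rank_span_jointEigenvectors (isLeibniz_opFamily hLeib)
    (commute_opFamily hδcomm) (mem_op_iff_forall_opFamily_eq_zero hD₀') hTfin
    fun lam h => (hTeig lam h).opFamily
  rw [jointEigenvectors_opFamily] at hrank'
  exact ⟨hTfin, ⟨eigenSubalgebra hLeib _, rfl, fun x hx _ =>
    inv_mem_eigenSubalgebra hLeib hD₀' hTfin hTeig hx⟩,
    congrArg SetLike.coe (restrictScalars_span_jointEigenvectors hLeib hD₀' _),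
    rank_span_jointEigenvectors hLeib hδcomm hD₀' hTfin hTeig, hrank'⟩
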